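/- Let O be a finite set, w a weight on K_O, and T a minimum spanning tree of w. Then the single linkage ultra-metric SL(w) equals α(T, w|_T), i.e., SL(w)(x,y) is the maximum w-weight of an edge on the unique path in T from x to y. -/

import Mathlib

open SimpleGraph Finset

variable {V : Type*} [Fintype V] [DecidableEq V]

/-- Total weight of (the edge set of) a simple graph `T` under edge weights `w`. -/
noncomputable def totalWeight (w : Sym2 V → ℝ) (T : SimpleGraph V) : ℝ :=
  ∑ e ∈ (Set.toFinite T.edgeSet).toFinset, w e

/-- `T` is a minimum spanning tree of the complete graph on `V` with weights `w`. -/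
def IsMST (w : Sym2 V → ℝ) (T : SimpleGraph V) : Prop :=
  T.IsTree ∧ ∀ T' : SimpleGraph V, T'.IsTree → totalWeight w T ≤ totalWeight w T'

/-- A weight on the complete graph: nonnegative, vanishing on the diagonal. -/
def IsWeight (d : Sym2 V → ℝ) : Prop :=
  (∀ e, 0 ≤ d e) ∧ ∀ x : V, d s(x, x) = 0

/-- An ultra-metric, encoded as a function on unordered pairs. -/
def IsUltrametric (u : Sym2 V → ℝ) : Prop :=
  IsWeight u ∧ ∀ x y z : V, u s(x, z) ≤ max (u s(x, y)) (u s(y, z))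

/-- A (pseudo-)metric, encoded as a function on unordered pairs. -/
def IsMetric (d : Sym2 V → ℝ) : Prop :=
  IsWeight d ∧ ∀ x y z : V, d s(x, z) ≤ d s(x, y) + d s(y, z)

/-- The single linkage ultra-metric of a weight `d`. -/
noncomputable def SL (d : Sym2 V → ℝ) (e : Sym2 V) : ℝ :=
  sSup {r | ∃ u : Sym2 V → ℝ, IsUltrametric u ∧ u ≤ d ∧ u e = r}

/-- Maximum weight of an edge along a walk (0 for the empty walk). -/
noncomputable def pathMax (w : Sym2 V → ℝ) {T : SimpleGraph V} {x y : V}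
    (p : T.Walk x y) : ℝ :=
  (p.edges.map w).foldr max 0

/-- Sum of weights of the edges along a walk. -/
noncomputable def pathSum (w : Sym2 V → ℝ) {T : SimpleGraph V} {x y : V}
    (p : T.Walk x y) : ℝ :=
  (p.edges.map w).sum

/-- `alpha T hT w x y`: max weight of an edge on the unique path in the tree `T` from `x` to `y`. -/
noncomputable def alpha (T : SimpleGraph V) (hT : T.IsTree) (w : Sym2 V → ℝ)
    (x y : V) : ℝ :=
  pathMax w (hT.existsUnique_path x y).exists.choose

/-- `omega T hT w x y`: the tree metric, the sum of weights along the unique path in `T`. -/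
noncomputable def treeOmega (T : SimpleGraph V) (hT : T.IsTree) (w : Sym2 V → ℝ)
    (x y : V) : ℝ :=
  pathSum w (hT.existsUnique_path x y).exists.choose

/-- Ultra-metric as a two-variable function. -/
def IsUltrametricFn (u : V → V → ℝ) : Prop :=
  (∀ x y, 0 ≤ u x y) ∧ (∀ x, u x x = 0) ∧ (∀ x y, u x y = u y x) ∧
    ∀ x y z, u x z ≤ max (u x y) (u y z)

/-!
Every ultrametric `u ≤ w` is bounded, by the ultrametric inequality, by the largest `w`-weight
along any walk, so `SL w ≤ α`. Conversely `α` is itself an ultrametric, since the tree path from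
`x` to `z` runs inside the union of the paths `x – y` and `y – z`, and `α ≤ w` is the cycle
property of minimum spanning trees: an edge `e` on the tree path from `x` to `y` with
`w e > w s(x, y)` could be exchanged for `s(x, y)`, giving a lighter spanning tree.
So `α` is the largest ultrametric below `w`.
-/

section PathMax

variable {V : Type*} {G : SimpleGraph V} {w : Sym2 V → ℝ} {x y z : V}

@[simp] lemma pathMax_nil : pathMax w (Walk.nil : G.Walk x x) = 0 := rfl

@[simp] lemma pathMax_cons (h : G.Adj x y) (p : G.Walk y z) :
    pathMax w (Walk.cons h p) = max (w s(x, y)) (pathMax w p) := rfl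

lemma pathMax_le_iff {p : G.Walk x y} {c : ℝ} :
    pathMax w p ≤ c ↔ 0 ≤ c ∧ ∀ e ∈ p.edges, w e ≤ c := by
  induction p with
  | nil => simp
  | cons h p ih =>
    simp only [pathMax_cons, max_le_iff, ih, Walk.edges_cons, List.forall_mem_cons]
    tauto

lemma pathMax_nonneg (p : G.Walk x y) : 0 ≤ pathMax w p :=
  (pathMax_le_iff.1 le_rfl).1

lemma le_pathMax {p : G.Walk x y} {e : Sym2 V} (he : e ∈ p.edges) : w e ≤ pathMax w p :=
  (pathMax_le_iff.1 le_rfl).2 e he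

lemma pathMax_le_pathMax_of_subset {x' y' : V} {p : G.Walk x y} {q : G.Walk x' y'}
    (h : p.edges ⊆ q.edges) : pathMax w p ≤ pathMax w q :=
  pathMax_le_iff.2 ⟨pathMax_nonneg q, fun _ he => le_pathMax (h he)⟩

lemma pathMax_append (p : G.Walk x y) (q : G.Walk y z) :
    pathMax w (p.append q) = max (pathMax w p) (pathMax w q) := by
  induction p with
  | nil => exact (max_eq_right (pathMax_nonneg q)).symm
  | cons h p ih => rw [Walk.cons_append, pathMax_cons, pathMax_cons, ih, max_assoc]

lemma IsUltrametric.le_pathMax {u : Sym2 V → ℝ} (hu : IsUltrametric u) (huw : u ≤ w)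
    (p : G.Walk x y) : u s(x, y) ≤ pathMax w p := by
  induction p with
  | nil => exact hu.1.2 _ ▸ le_rfl
  | @cons a b c h p ih => exact (hu.2 a b c).trans (max_le_max (huw _) ih)

end PathMax

section TreeUltrametric

variable {V : Type*} {T : SimpleGraph V} (hT : T.IsTree) {w : Sym2 V → ℝ}

lemma alpha_eq_pathMax {x y : V} {p : T.Walk x y} (hp : p.IsPath) :
    alpha T hT w x y = pathMax w p := by
  rw [alpha, (hT.existsUnique_path x y).unique (hT.existsUnique_path x y).exists.choose_spec hp]

lemma alpha_le_pathMax {x y : V} (p : T.Walk x y) : alpha T hT w x y ≤ pathMax w p := by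
  classical
  rw [alpha_eq_pathMax hT p.bypass_isPath]
  exact pathMax_le_pathMax_of_subset p.edges_bypass_subset_edges

lemma alpha_self (x : V) : alpha T hT w x x = 0 :=
  le_antisymm (alpha_le_pathMax hT .nil) (pathMax_nonneg _)

lemma alpha_comm (x y : V) : alpha T hT w x y = alpha T hT w y x := by
  have key : ∀ a b, alpha T hT w a b ≤ alpha T hT w b a := fun a b => by
    obtain ⟨p, hp⟩ := (hT.existsUnique_path b a).exists
    rw [alpha_eq_pathMax hT hp]
    exact (alpha_le_pathMax hT p.reverse).trans
      (pathMax_le_pathMax_of_subset (by simp))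
  exact le_antisymm (key x y) (key y x)

lemma alpha_le_max (x y z : V) :
    alpha T hT w x z ≤ max (alpha T hT w x y) (alpha T hT w y z) := by
  obtain ⟨p, hp⟩ := (hT.existsUnique_path x y).exists
  obtain ⟨q, hq⟩ := (hT.existsUnique_path y z).exists
  rw [alpha_eq_pathMax hT hp, alpha_eq_pathMax hT hq, ← pathMax_append]
  exact alpha_le_pathMax hT _

noncomputable def treeUltrametric (w : Sym2 V → ℝ) : Sym2 V → ℝ :=
  Sym2.lift ⟨alpha T hT w, alpha_comm hT⟩

lemma isUltrametric_treeUltrametric : IsUltrametric (treeUltrametric hT w) :=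
  ⟨⟨fun e => e.ind fun _ _ => pathMax_nonneg _, alpha_self hT⟩, alpha_le_max hT⟩

end TreeUltrametric

namespace SimpleGraph

variable {V : Type*} {T : SimpleGraph V} {x y : V} {e : Sym2 V}

lemma edgeSet_sup_edge_deleteEdges (hne : x ≠ y) :
    ((T ⊔ edge x y).deleteEdges {e}).edgeSet = insert s(x, y) T.edgeSet \ {e} := by
  rw [edgeSet_deleteEdges, edgeSet_sup, edgeSet_edge_of_ne hne, Set.union_singleton]

lemma IsTree.isTree_sup_edge_deleteEdges [Finite V] (hT : T.IsTree) (hxy : ¬T.Adj x y)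
    (hne : x ≠ y) {p : T.Walk x y} (hp : p.IsPath) (he : e ∈ p.edges) :
    ((T ⊔ edge x y).deleteEdges {e}).IsTree := by
  have heT : e ∈ T.edgeSet := p.edges_subset_edgeSet he
  have hadj : (T ⊔ edge x y).Adj y x := Or.inr (by simp [edge_adj, hne.symm])
  have hcycle : (Walk.cons hadj (p.mapLe le_sup_left)).IsCycle :=
    Path.cons_isCycle ⟨_, hp.mapLe le_sup_left⟩ hadj fun h => hxy <|
      p.adj_of_mem_edges (by simpa [Walk.edges_mapLe_eq_edges, Sym2.eq_swap] using h)
  have hcard := (isTree_iff_connected_and_card.1 hT).2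
  refine isTree_iff_connected_and_card.2 ⟨?_, ?_⟩
  · induction e using Sym2.ind with
    | _ a b =>
      exact (hT.connected.mono le_sup_left).connected_delete_edge_of_not_isBridge
        fun hbr => hbr.notMem_edges_of_isCycle hcycle (by simp [he])
  · rw [Nat.card_coe_set_eq] at hcard
    rw [Nat.card_coe_set_eq, edgeSet_sup_edge_deleteEdges hne,
      Set.ncard_sdiff_singleton_of_mem (Set.mem_insert_of_mem _ heT),
      Set.ncard_insert_of_notMem (show s(x, y) ∉ T.edgeSet from hxy)]
    omega

end SimpleGraph

section MinimumSpanningTree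

variable {V : Type*} [Fintype V] {w : Sym2 V → ℝ} {T : SimpleGraph V} {x y : V} {e : Sym2 V}

lemma totalWeight_sup_edge_deleteEdges (hxy : ¬T.Adj x y) (hne : x ≠ y) (heT : e ∈ T.edgeSet) :
    totalWeight w ((T ⊔ edge x y).deleteEdges {e}) = w s(x, y) + totalWeight w T - w e := by
  classical
  have hfinset : (Set.toFinite ((T ⊔ edge x y).deleteEdges {e}).edgeSet).toFinset =
      (insert s(x, y) (Set.toFinite T.edgeSet).toFinset).erase e := by
    ext
    simp only [edgeSet_sup_edge_deleteEdges hne, Set.Finite.mem_toFinset, Finset.mem_erase,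
      Finset.mem_insert, Set.mem_sdiff, Set.mem_insert_iff, Set.mem_singleton_iff]
    tauto
  rw [totalWeight, totalWeight, hfinset, Finset.sum_erase_eq_sub (by simp [heT]),
    Finset.sum_insert (by simpa using hxy)]

lemma IsMST.le_of_mem_edges (hT : IsMST w T) (hxy : ¬T.Adj x y) {p : T.Walk x y}
    (hp : p.IsPath) (he : e ∈ p.edges) : w e ≤ w s(x, y) := by
  have hne : x ≠ y := by
    rintro rfl
    simp [Walk.isPath_iff_nil.1 hp |>.eq_nil] at he
  have hle := hT.2 _ (hT.1.isTree_sup_edge_deleteEdges hxy hne hp he)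
  rw [totalWeight_sup_edge_deleteEdges hxy hne (p.edges_subset_edgeSet he)] at hle
  linarith

lemma IsMST.alpha_le (hw : ∀ e, 0 ≤ w e) (hT : IsMST w T) (x y : V) :
    alpha T hT.1 w x y ≤ w s(x, y) := by
  by_cases hxy : T.Adj x y
  · exact (alpha_le_pathMax hT.1 hxy.toWalk).trans (by simp [hw])
  · obtain ⟨p, hp⟩ := (hT.1.existsUnique_path x y).exists
    rw [alpha_eq_pathMax hT.1 hp]
    exact pathMax_le_iff.2 ⟨hw _, fun _ he => hT.le_of_mem_edges hxy hp he⟩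

lemma IsMST.treeUltrametric_le (hw : ∀ e, 0 ≤ w e) (hT : IsMST w T) :
    treeUltrametric hT.1 w ≤ w :=
  fun e => e.ind (hT.alpha_le hw)

end MinimumSpanningTree

/-- if `T` is an MST of `w` then `SL w = alpha T w`. -/
theorem SL_eq_alpha (w : Sym2 V → ℝ) (hw : IsWeight w)
    (T : SimpleGraph V) (hT : IsMST w T) :
    ∀ x y : V, SL w s(x, y) = alpha T hT.1 w x y := by
  intro x y
  refine IsGreatest.csSup_eq ⟨⟨treeUltrametric hT.1 w, isUltrametric_treeUltrametric hT.1,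
    hT.treeUltrametric_le hw.1, rfl⟩, ?_⟩
  rintro _ ⟨u, hu, huw, rfl⟩
  obtain ⟨p, hp⟩ := (hT.1.existsUnique_path x y).exists
  rw [alpha_eq_pathMax hT.1 hp]
  exact hu.le_pathMax huw p
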